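/- Let M ∈ SL₊(Γ_n(ℝ)) with Ψ(M) = [[A,C'],[C,A']] (the ball-model form) and C ≠ 0. Then |P|² = (‖M‖² + 2)/(‖M‖² - 2) and R² = 4/(‖M‖² - 2), where P = C⁻¹A' is the centre and R = 1/|C| the radius of the isometric sphere of Ψ(M), and ‖M‖² = |α|²+|β|²+|γ|²+|δ|². -/
import Mathlib


open CliffordAlgebra

/-- The negative-definite quadratic form on `ℝ^m`, so that `CliffordAlgebra (Qneg m)`
is the Clifford algebra on `m` anticommuting generators each squaring to `-1`. -/
noncomputable def Qneg (m : ℕ) : QuadraticForm ℝ (Fin m → ℝ) :=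
  -(QuadraticMap.weightedSumSquares ℝ (fun _ : Fin m => (1 : ℝ)))

/-- The `h`-th generator `i_h`. -/
noncomputable def gen (m : ℕ) (h : Fin m) : CliffordAlgebra (Qneg m) :=
  ι (Qneg m) (Pi.single h 1)

/-- The scalar (grade-0) coefficient of a Clifford algebra element. -/
noncomputable def scalarPart {m : ℕ} (x : CliffordAlgebra (Qneg m)) : ℝ :=
  letI : Invertible (2 : ℝ) := invertibleOfNonzero two_ne_zero
  ExteriorAlgebra.algebraMapInv ((CliffordAlgebra.equivExterior (Qneg m)) x)

/-- Clifford conjugation `x ↦ x̄`, the composite of reversal and the grade involution. -/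
noncomputable def cconj {m : ℕ} (x : CliffordAlgebra (Qneg m)) : CliffordAlgebra (Qneg m) :=
  CliffordAlgebra.reverse (CliffordAlgebra.involute x)

/-- The square norm `|x|² = ∑ x_I²` of a Clifford element (sum of squares of the
coordinates in the standard monomial basis), realized as the scalar part of `x̄ x`. -/
noncomputable def cnormSq {m : ℕ} (x : CliffordAlgebra (Qneg m)) : ℝ :=
  scalarPart (cconj x * x)

/-- Clifford vectors: elements of the form `a₀ + a₁ i₁ + ⋯ + a_m i_m` (the paper's `V`). -/
def IsCliffordVector {m : ℕ} (x : CliffordAlgebra (Qneg m)) : Prop :=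
  ∃ (a : ℝ) (v : Fin m → ℝ), x = algebraMap ℝ _ a + ι (Qneg m) v

/-- The Clifford group `Γ`: products of invertible Clifford vectors. -/
noncomputable def CliffordGroup (m : ℕ) : Submonoid (CliffordAlgebra (Qneg m)) :=
  Submonoid.closure {x | IsCliffordVector x ∧ IsUnit x}

/-- The Vahlen conditions on the entries of a matrix `[[α,β],[γ,δ]] ∈ SL₊(Γ_n(ℝ))`. -/
def IsVahlen {m : ℕ} (α β γ δ : CliffordAlgebra (Qneg m)) : Prop :=
  (α ∈ CliffordGroup m ∨ α = 0) ∧ (β ∈ CliffordGroup m ∨ β = 0) ∧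
  (γ ∈ CliffordGroup m ∨ γ = 0) ∧ (δ ∈ CliffordGroup m ∨ δ = 0) ∧
  α * reverse δ - β * reverse γ = 1 ∧
  IsCliffordVector (α * reverse β) ∧ IsCliffordVector (γ * reverse δ) ∧
  IsCliffordVector (reverse γ * α) ∧ IsCliffordVector (reverse δ * β)

/-- Vectors of `V^n(ℝ)` viewed inside `Cl_{n+1}(ℝ)`: last coordinate zero. -/
def IsSmallVector {m : ℕ} (x : CliffordAlgebra (Qneg (m + 1))) : Prop :=
  ∃ (a : ℝ) (v : Fin (m + 1) → ℝ),
    v (Fin.last m) = 0 ∧ x = algebraMap ℝ _ a + ι (Qneg (m + 1)) v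

/-- The Clifford group `Γ_n(ℝ)` viewed inside `Cl_{n+1}(ℝ)`. -/
noncomputable def SmallCliffordGroup (m : ℕ) : Submonoid (CliffordAlgebra (Qneg (m + 1))) :=
  Submonoid.closure {x | IsSmallVector x ∧ IsUnit x}

/-- The Vahlen conditions for `SL₊(Γ_n(ℝ))`, with entries viewed inside `Cl_{n+1}(ℝ)`. -/
def IsSmallVahlen {m : ℕ} (α β γ δ : CliffordAlgebra (Qneg (m + 1))) : Prop :=
  (α ∈ SmallCliffordGroup m ∨ α = 0) ∧ (β ∈ SmallCliffordGroup m ∨ β = 0) ∧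
  (γ ∈ SmallCliffordGroup m ∨ γ = 0) ∧ (δ ∈ SmallCliffordGroup m ∨ δ = 0) ∧
  α * reverse δ - β * reverse γ = 1 ∧
  IsSmallVector (α * reverse β) ∧ IsSmallVector (γ * reverse δ) ∧
  IsSmallVector (reverse γ * α) ∧ IsSmallVector (reverse δ * β)

/-! ### Auxiliary lemmas -/

section Aux

variable {m : ℕ}

lemma cconj_mul (x y : CliffordAlgebra (Qneg m)) : cconj (x * y) = cconj y * cconj x := by
  unfold cconj; rw [map_mul, reverse.map_mul]

lemma cconj_add (x y : CliffordAlgebra (Qneg m)) : cconj (x + y) = cconj x + cconj y := by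
  unfold cconj; rw [map_add, map_add]

lemma cconj_sub (x y : CliffordAlgebra (Qneg m)) : cconj (x - y) = cconj x - cconj y := by
  unfold cconj; rw [map_sub, map_sub]

lemma cconj_smul (r : ℝ) (x : CliffordAlgebra (Qneg m)) : cconj (r • x) = r • cconj x := by
  unfold cconj; rw [map_smul, map_smul]

lemma cconj_zero : cconj (0 : CliffordAlgebra (Qneg m)) = 0 := by
  unfold cconj; rw [map_zero, map_zero]

lemma cconj_algebraMap (r : ℝ) :
    cconj (algebraMap ℝ (CliffordAlgebra (Qneg m)) r) = algebraMap ℝ _ r := by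
  unfold cconj; rw [AlgHom.commutes, reverse.commutes]

lemma cconj_one : cconj (1 : CliffordAlgebra (Qneg m)) = 1 := by
  rw [← (algebraMap ℝ (CliffordAlgebra (Qneg m))).map_one, cconj_algebraMap]

lemma cconj_ι (v : Fin m → ℝ) : cconj (ι (Qneg m) v) = -ι (Qneg m) v := by
  unfold cconj; rw [involute_ι, map_neg, reverse_ι]

lemma cconj_cconj (x : CliffordAlgebra (Qneg m)) : cconj (cconj x) = x := by
  unfold cconj
  rw [reverse_involute, reverse_reverse, involute_involute]

lemma involute_cconj (x : CliffordAlgebra (Qneg m)) : involute (cconj x) = reverse x := by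
  unfold cconj; rw [← reverse_involute, involute_involute]

lemma reverse_cconj (x : CliffordAlgebra (Qneg m)) : reverse (cconj x) = involute x := by
  unfold cconj; rw [reverse_reverse]

lemma cconj_involute (x : CliffordAlgebra (Qneg m)) : cconj (involute x) = reverse x := by
  unfold cconj; rw [involute_involute]

lemma cconj_reverse (x : CliffordAlgebra (Qneg m)) : cconj (reverse x) = involute x := by
  unfold cconj; rw [← reverse_involute, reverse_reverse]

lemma involute_reverse_eq (x : CliffordAlgebra (Qneg m)) : involute (reverse x) = cconj x := by
  unfold cconj; rw [reverse_involute]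

lemma scalarPart_algebraMap (r : ℝ) :
    scalarPart (algebraMap ℝ (CliffordAlgebra (Qneg m)) r) = r := by
  letI : Invertible (2 : ℝ) := invertibleOfNonzero two_ne_zero
  show ExteriorAlgebra.algebraMapInv ((equivExterior (Qneg m)) (algebraMap ℝ _ r)) = r
  simp only [equivExterior, changeFormEquiv_apply, changeForm_algebraMap]
  exact ExteriorAlgebra.algebraMap_leftInverse _ r

lemma scalarPart_zero : scalarPart (0 : CliffordAlgebra (Qneg m)) = 0 := by
  rw [← (algebraMap ℝ (CliffordAlgebra (Qneg m))).map_zero, scalarPart_algebraMap]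

lemma one_ne_zero_cl : (1 : CliffordAlgebra (Qneg m)) ≠ 0 := by
  intro h
  have h2 := congrArg scalarPart h
  rw [← (algebraMap ℝ (CliffordAlgebra (Qneg m))).map_one, scalarPart_algebraMap,
    scalarPart_zero] at h2
  exact one_ne_zero h2

lemma Qneg_apply (v : Fin m → ℝ) : Qneg m v = -∑ i, v i * v i := by
  simp [Qneg, QuadraticMap.weightedSumSquares_apply]

lemma Qneg_single (h : Fin m) : Qneg m (Pi.single h 1) = -1 := by
  rw [Qneg_apply]
  norm_num
  rw [Finset.sum_eq_single h]
  · simp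
  · intro b _ hb; simp [Pi.single_eq_of_ne hb]
  · intro hh; exact absurd (Finset.mem_univ h) hh

lemma polar_single_eq_zero (h : Fin m) (v : Fin m → ℝ) (hv : v h = 0) :
    QuadraticMap.polar (Qneg m) (Pi.single h 1) v = 0 := by
  rw [QuadraticMap.polar, Qneg_apply, Qneg_apply, Qneg_apply]
  have key : ∑ i : Fin m, ((Pi.single h 1 : Fin m → ℝ) + v) i * ((Pi.single h 1 : Fin m → ℝ) + v) i
      = (∑ i : Fin m, (Pi.single h 1 : Fin m → ℝ) i * (Pi.single h 1 : Fin m → ℝ) i)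
        + (∑ i : Fin m, v i * v i)
        + 2 * ∑ i : Fin m, (Pi.single h 1 : Fin m → ℝ) i * v i := by
    rw [Finset.mul_sum, ← Finset.sum_add_distrib, ← Finset.sum_add_distrib]
    apply Finset.sum_congr rfl
    intro i _
    simp only [Pi.add_apply]
    ring
  rw [key]
  have hs : ∑ i : Fin m, (Pi.single h 1 : Fin m → ℝ) i * v i = v h := by
    rw [Finset.sum_eq_single h]
    · simp
    · intro b _ hb; simp [Pi.single_eq_of_ne hb]
    · intro hh; exact absurd (Finset.mem_univ h) hh
  rw [hs, hv]
  ring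

lemma e_mul_e : gen (m+1) (Fin.last m) * gen (m+1) (Fin.last m) = -1 := by
  unfold gen
  rw [ι_sq_scalar, Qneg_single, map_neg, map_one]

lemma cconj_e : cconj (gen (m+1) (Fin.last m)) = -(gen (m+1) (Fin.last m)) := by
  unfold gen; rw [cconj_ι]

/-- commutation with the extra generator `e` -/
def EComm {m : ℕ} (x : CliffordAlgebra (Qneg (m+1))) : Prop :=
  gen (m+1) (Fin.last m) * x = involute x * gen (m+1) (Fin.last m)

lemma ecomm_zero : EComm (0 : CliffordAlgebra (Qneg (m+1))) := by
  unfold EComm; simp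

lemma ecomm_one : EComm (1 : CliffordAlgebra (Qneg (m+1))) := by
  unfold EComm; simp

lemma EComm.mul {x y : CliffordAlgebra (Qneg (m+1))} (hx : EComm x) (hy : EComm y) :
    EComm (x * y) := by
  unfold EComm at *
  rw [← mul_assoc, hx, mul_assoc, hy, ← mul_assoc, ← map_mul]

lemma ecomm_smallVector {x : CliffordAlgebra (Qneg (m+1))} (hx : IsSmallVector x) : EComm x := by
  obtain ⟨a, v, hv, rfl⟩ := hx
  unfold EComm
  have h1 : gen (m+1) (Fin.last m) * ι (Qneg (m+1)) v
      = -(ι (Qneg (m+1)) v * gen (m+1) (Fin.last m)) := by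
    have h2 := ι_mul_ι_add_swap (Q := Qneg (m+1)) (Pi.single (Fin.last m) 1) v
    rw [polar_single_eq_zero _ v hv, map_zero] at h2
    unfold gen
    exact eq_neg_of_add_eq_zero_left h2
  rw [map_add, AlgHom.commutes, involute_ι, mul_add, h1, add_mul, neg_mul,
    ← Algebra.commutes]

lemma ecomm_involute {x : CliffordAlgebra (Qneg (m+1))} (hx : EComm x) :
    EComm (involute x) := by
  unfold EComm at *
  have h := congrArg CliffordAlgebra.involute hx
  rw [map_mul, map_mul] at h
  have he : involute (gen (m+1) (Fin.last m)) = -gen (m+1) (Fin.last m) := by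
    unfold gen; rw [involute_ι]
  rw [he, involute_involute] at h
  rw [involute_involute]
  rw [neg_mul, mul_neg] at h
  exact neg_injective h

lemma ecomm_reverse {x : CliffordAlgebra (Qneg (m+1))} (hx : EComm x) :
    EComm (reverse x) := by
  unfold EComm at *
  have h := congrArg cconj hx
  rw [cconj_mul, cconj_mul, cconj_e] at h
  rw [mul_neg, neg_mul] at h
  have h2 := neg_injective h
  rw [cconj_involute] at h2
  rw [involute_reverse_eq]
  exact h2.symm

lemma ecomm_cconj {x : CliffordAlgebra (Qneg (m+1))} (hx : EComm x) :
    EComm (cconj x) := by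
  have := ecomm_involute (ecomm_reverse hx)
  rwa [involute_reverse_eq] at this

lemma ecomm_group {x : CliffordAlgebra (Qneg (m+1))} (hx : x ∈ SmallCliffordGroup m) :
    EComm x := by
  induction hx using Submonoid.closure_induction with
  | mem y hy => exact ecomm_smallVector hy.1
  | one => exact ecomm_one
  | mul a b _ _ ha hb => exact ha.mul hb

lemma ecomm_entry {x : CliffordAlgebra (Qneg (m+1))}
    (hx : x ∈ SmallCliffordGroup m ∨ x = 0) : EComm x := by
  rcases hx with hx | rfl
  · exact ecomm_group hx
  · exact ecomm_zero

lemma smallVector_reverse {x : CliffordAlgebra (Qneg (m+1))} (hx : IsSmallVector x) :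
    reverse x = x := by
  obtain ⟨a, v, -, rfl⟩ := hx
  rw [map_add, reverse_ι, reverse.commutes]

lemma smallVector_cconj {x : CliffordAlgebra (Qneg (m+1))} (hx : IsSmallVector x) :
    cconj x = involute x := by
  obtain ⟨a, v, -, rfl⟩ := hx
  rw [cconj_add, cconj_algebraMap, cconj_ι, map_add, AlgHom.commutes, involute_ι]

lemma vector_norm (a : ℝ) (v : Fin (m+1) → ℝ) :
    cconj (algebraMap ℝ _ a + ι (Qneg (m+1)) v) * (algebraMap ℝ _ a + ι (Qneg (m+1)) v)
      = algebraMap ℝ _ (a * a - Qneg (m+1) v) ∧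
    (algebraMap ℝ _ a + ι (Qneg (m+1)) v) * cconj (algebraMap ℝ _ a + ι (Qneg (m+1)) v)
      = algebraMap ℝ _ (a * a - Qneg (m+1) v) := by
  rw [cconj_add, cconj_algebraMap, cconj_ι]
  set A := algebraMap ℝ (CliffordAlgebra (Qneg (m+1))) a
  set w := ι (Qneg (m+1)) v
  have hc : w * A = A * w := (Algebra.commutes a w).symm
  have hw : w * w = algebraMap ℝ _ (Qneg (m+1) v) := ι_sq_scalar _ v
  constructor
  · have : (A + -w) * (A + w) = A * A - w * w + (A * w - w * A) := by noncomm_ring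
    rw [this, hc, sub_self, add_zero, hw, ← map_mul, ← map_sub]
  · have : (A + w) * (A + -w) = A * A - w * w + (w * A - A * w) := by noncomm_ring
    rw [this, hc, sub_self, add_zero, hw, ← map_mul, ← map_sub]

lemma group_isUnit {x : CliffordAlgebra (Qneg (m+1))} (hx : x ∈ SmallCliffordGroup m) :
    IsUnit x := by
  induction hx using Submonoid.closure_induction with
  | mem y hy => exact hy.2
  | one => exact isUnit_one
  | mul a b _ _ ha hb => exact ha.mul hb

lemma group_norm {x : CliffordAlgebra (Qneg (m+1))} (hx : x ∈ SmallCliffordGroup m) :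
    ∃ r : ℝ, cconj x * x = algebraMap ℝ _ r ∧ x * cconj x = algebraMap ℝ _ r := by
  induction hx using Submonoid.closure_induction with
  | mem y hy =>
    obtain ⟨a, v, -, rfl⟩ := hy.1
    exact ⟨a * a - Qneg (m+1) v, (vector_norm a v).1, (vector_norm a v).2⟩
  | one => exact ⟨1, by rw [cconj_one, one_mul, map_one], by rw [cconj_one, one_mul, map_one]⟩
  | mul x y _ _ hx hy =>
    obtain ⟨r, hr1, hr2⟩ := hx
    obtain ⟨t, ht1, ht2⟩ := hy
    refine ⟨r * t, ?_, ?_⟩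
    · calc cconj (x * y) * (x * y) = cconj y * (cconj x * x) * y := by
            rw [cconj_mul]; noncomm_ring
        _ = cconj y * algebraMap ℝ _ r * y := by rw [hr1]
        _ = algebraMap ℝ _ r * (cconj y * y) := by
            rw [← Algebra.commutes r (cconj y), mul_assoc]
        _ = algebraMap ℝ _ (r * t) := by rw [ht1, ← map_mul]
    · calc (x * y) * cconj (x * y) = x * (y * cconj y) * cconj x := by
            rw [cconj_mul]; noncomm_ring
        _ = x * algebraMap ℝ _ t * cconj x := by rw [ht2]
        _ = algebraMap ℝ _ t * (x * cconj x) := by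
            rw [← Algebra.commutes t x, mul_assoc]
        _ = algebraMap ℝ _ (r * t) := by rw [hr2, ← map_mul, mul_comm]

lemma entry_norm {x : CliffordAlgebra (Qneg (m+1))}
    (hx : x ∈ SmallCliffordGroup m ∨ x = 0) :
    ∃ r : ℝ, cconj x * x = algebraMap ℝ _ r ∧ x * cconj x = algebraMap ℝ _ r ∧ cnormSq x = r := by
  rcases hx with hx | rfl
  · obtain ⟨r, h1, h2⟩ := group_norm hx
    exact ⟨r, h1, h2, by rw [cnormSq, h1, scalarPart_algebraMap]⟩
  · refine ⟨0, ?_, ?_, ?_⟩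
    · rw [cconj_zero, zero_mul, map_zero]
    · rw [cconj_zero, mul_zero, map_zero]
    · rw [cnormSq, cconj_zero, zero_mul, ← (algebraMap ℝ (CliffordAlgebra (Qneg (m+1)))).map_zero,
        scalarPart_algebraMap]

lemma unit_norm_ne_zero {x : CliffordAlgebra (Qneg (m+1))} {r : ℝ} (hx : IsUnit x)
    (h1 : cconj x * x = algebraMap ℝ _ r) : r ≠ 0 := by
  intro h0
  rw [h0, map_zero] at h1
  obtain ⟨u, rfl⟩ := hx
  have hc : cconj (u : CliffordAlgebra (Qneg (m+1))) = 0 := by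
    have : cconj (u : CliffordAlgebra (Qneg (m+1))) * ((u : _) * (↑u⁻¹ : _)) = 0 := by
      rw [← mul_assoc, h1, zero_mul]
    rwa [Units.mul_inv, mul_one] at this
  have hu0 : (u : CliffordAlgebra (Qneg (m+1))) = 0 := by
    rw [← cconj_cconj (u : CliffordAlgebra (Qneg (m+1))), hc, cconj_zero]
  have : (1 : CliffordAlgebra (Qneg (m+1))) = 0 := by
    rw [← u.mul_inv, hu0, zero_mul]
  exact one_ne_zero_cl this

lemma norm_smul_one {x : CliffordAlgebra (Qneg (m+1))} {r : ℝ} (hr : r ≠ 0)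
    (h : x = algebraMap ℝ _ r) : r⁻¹ • x = 1 := by
  rw [h, Algebra.smul_def, ← map_mul, inv_mul_cancel₀ hr, map_one]

lemma patternA {x y : CliffordAlgebra (Qneg (m+1))} (hv : IsSmallVector (x * reverse y))
    (hy : y ∈ SmallCliffordGroup m ∨ y = 0) :
    cconj x * y = reverse y * involute x := by
  rcases hy with hy | rfl
  · obtain ⟨r, h1, h2⟩ := group_norm hy
    have hr : r ≠ 0 := unit_norm_ne_zero (group_isUnit hy) h1
    have h3 : reverse y * involute y = algebraMap ℝ _ r := by
      have h' := congrArg involute h1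
      rwa [map_mul, involute_cconj, AlgHom.commutes] at h'
    have hxx : x = r⁻¹ • ((x * reverse y) * involute y) := by
      calc x = x * (r⁻¹ • (reverse y * involute y)) := by
            rw [norm_smul_one hr h3, mul_one]
        _ = r⁻¹ • ((x * reverse y) * involute y) := by rw [mul_smul_comm, mul_assoc]
    have hL : cconj (r⁻¹ • ((x * reverse y) * involute y))
        = r⁻¹ • (reverse y * involute (x * reverse y)) := by
      rw [cconj_smul, cconj_mul, cconj_involute, smallVector_cconj hv]
    have hR : involute (r⁻¹ • ((x * reverse y) * involute y))
        = r⁻¹ • (involute (x * reverse y) * y) := by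
      rw [map_smul, map_mul, involute_involute]
    rw [hxx, hL, hR, smul_mul_assoc, mul_smul_comm, mul_assoc]
  · rw [map_zero, mul_zero, zero_mul]

lemma patternB {x y : CliffordAlgebra (Qneg (m+1))} (hv : IsSmallVector (reverse y * x))
    (hx : x ∈ SmallCliffordGroup m ∨ x = 0) :
    y * cconj x = involute x * reverse y := by
  rcases hx with hx | rfl
  · obtain ⟨r, h1, h2⟩ := group_norm hx
    have hr : r ≠ 0 := unit_norm_ne_zero (group_isUnit hx) h1
    have hry : reverse y = r⁻¹ • ((reverse y * x) * cconj x) := by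
      calc reverse y = reverse y * (r⁻¹ • (x * cconj x)) := by
            rw [norm_smul_one hr h2, mul_one]
        _ = r⁻¹ • ((reverse y * x) * cconj x) := by rw [mul_smul_comm, mul_assoc]
    have hy' : y = r⁻¹ • (involute x * (reverse y * x)) := by
      conv_lhs => rw [← reverse_reverse y, hry]
      rw [map_smul, reverse.map_mul, reverse_cconj, smallVector_reverse hv]
    calc y * cconj x = r⁻¹ • (involute x * (reverse y * x)) * cconj x := by rw [← hy']
      _ = r⁻¹ • (involute x * ((reverse y * x) * cconj x)) := by
          rw [smul_mul_assoc, mul_assoc]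
      _ = involute x * (r⁻¹ • ((reverse y * x) * cconj x)) := by rw [mul_smul_comm]
      _ = involute x * reverse y := by rw [← hry]
  · rw [cconj_zero, mul_zero, map_zero, zero_mul]

end Aux

section KeyRing
variable {R : Type*} [Ring R] [Algebra ℝ R]

lemma key1 (e ga be' de al' ga' be de' al rbe rde cal cga : R)
    (na nb nc nd : ℝ)
    (he : e * e = -1)
    (mga : e * ga = ga' * e) (mbe' : e * be' = be * e)
    (mde : e * de = de' * e) (mal' : e * al' = al * e)
    (nga : cga * ga = algebraMap ℝ R nc) (nbe : rbe * be' = algebraMap ℝ R nb)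
    (nal : cal * al = algebraMap ℝ R na) (nde : rde * de' = algebraMap ℝ R nd)
    (i5 : cal * de' - cga * be' = 1) (i3 : rde * al - rbe * ga = 1)
    (k4 : cga * de = rde * ga') (k3 : cal * be = rbe * al')
    (v4 : cal * ga' = cga * al') (v3 : rde * be = rbe * de) :
    (cga + rbe + (cal - rde) * e) * (ga + be' + (de - al') * e)
      = algebraMap ℝ R (na + nb + nc + nd - 2) := by
  have h1 : e * (ga + be' + (de - al') * e) = (ga' + be) * e - (de' - al) := by
    have h2 : e * ((de - al') * e) = -(de' - al) := by
      rw [← mul_assoc, mul_sub, mde, mal', ← sub_mul, mul_assoc, he]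
      noncomm_ring
    rw [mul_add, mul_add, mga, mbe', h2]
    noncomm_ring
  have expand : (cga + rbe + (cal - rde) * e) * (ga + be' + (de - al') * e)
      = (cga + rbe) * (ga + be') - (cal - rde) * (de' - al)
        + ((cga + rbe) * (de - al') + (cal - rde) * (ga' + be)) * e := by
    calc (cga + rbe + (cal - rde) * e) * (ga + be' + (de - al') * e)
        = (cga + rbe) * (ga + be' + (de - al') * e)
          + (cal - rde) * (e * (ga + be' + (de - al') * e)) := by noncomm_ring
      _ = _ := by rw [h1]; noncomm_ring
  rw [expand]
  have hbrack : (cga + rbe) * (de - al') + (cal - rde) * (ga' + be) = 0 := by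
    have hd : (cga + rbe) * (de - al') + (cal - rde) * (ga' + be)
        = (cga * de - rde * ga') + (cal * be - rbe * al')
          + (cal * ga' - cga * al') + (rbe * de - rde * be) := by noncomm_ring
    rw [hd, k4, k3, v4, v3]
    simp
  rw [hbrack, zero_mul, add_zero]
  have hscal : (cga + rbe) * (ga + be') - (cal - rde) * (de' - al)
      = cga * ga + rbe * be' + cal * al + rde * de'
        + (cga * be' - cal * de') + (rbe * ga - rde * al) := by noncomm_ring
  rw [hscal, nga, nbe, nal, nde]
  have e5 : cga * be' - cal * de' = -1 := by rw [← neg_sub, i5]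
  have e3 : rbe * ga - rde * al = -1 := by rw [← neg_sub, i3]
  rw [e5, e3,
    show (na + nb + nc + nd - 2 : ℝ) = nc + nb + na + nd + -1 + -1 by ring]
  simp only [map_add, map_neg, map_one]

lemma key2 (e ga be' de al' rga cbe cde ral rbe rde cal cga : R)
    (na nb nc nd : ℝ)
    (he : e * e = -1)
    (mcga : e * cga = rga * e) (mrbe : e * rbe = cbe * e)
    (mcal : e * cal = ral * e) (mrde : e * rde = cde * e)
    (nga : ga * cga = algebraMap ℝ R nc) (nbe : be' * rbe = algebraMap ℝ R nb)
    (nal : al' * ral = algebraMap ℝ R na) (nde : de * cde = algebraMap ℝ R nd)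
    (i2 : de * ral - ga * rbe = 1) (i7 : al' * cde - be' * cga = 1)
    (k1 : ga * cal = al' * rga) (k2 : de * cbe = be' * rde)
    (v1 : be' * cal = al' * cbe) (v2 : ga * rde = de * rga) :
    (ga + be' + (de - al') * e) * (cga + rbe + (cal - rde) * e)
      = algebraMap ℝ R (na + nb + nc + nd - 2) := by
  have h1 : e * (cga + rbe + (cal - rde) * e) = (rga + cbe) * e - (ral - cde) := by
    have h2 : e * ((cal - rde) * e) = -(ral - cde) := by
      rw [← mul_assoc, mul_sub, mcal, mrde, ← sub_mul, mul_assoc, he]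
      noncomm_ring
    rw [mul_add, mul_add, mcga, mrbe, h2]
    noncomm_ring
  have expand : (ga + be' + (de - al') * e) * (cga + rbe + (cal - rde) * e)
      = (ga + be') * (cga + rbe) - (de - al') * (ral - cde)
        + ((ga + be') * (cal - rde) + (de - al') * (rga + cbe)) * e := by
    calc (ga + be' + (de - al') * e) * (cga + rbe + (cal - rde) * e)
        = (ga + be') * (cga + rbe + (cal - rde) * e)
          + (de - al') * (e * (cga + rbe + (cal - rde) * e)) := by noncomm_ring
      _ = _ := by rw [h1]; noncomm_ring
  rw [expand]
  have hbrack : (ga + be') * (cal - rde) + (de - al') * (rga + cbe) = 0 := by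
    have hd : (ga + be') * (cal - rde) + (de - al') * (rga + cbe)
        = (ga * cal - al' * rga) + (de * cbe - be' * rde)
          + (be' * cal - al' * cbe) + (de * rga - ga * rde) := by noncomm_ring
    rw [hd, k1, k2, v1, ← v2]
    simp
  rw [hbrack, zero_mul, add_zero]
  have hscal : (ga + be') * (cga + rbe) - (de - al') * (ral - cde)
      = ga * cga + be' * rbe + al' * ral + de * cde
        + (ga * rbe - de * ral) + (be' * cga - al' * cde) := by noncomm_ring
  rw [hscal, nga, nbe, nal, nde]
  have e2 : ga * rbe - de * ral = -1 := by rw [← neg_sub, i2]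
  have e7 : be' * cga - al' * cde = -1 := by rw [← neg_sub, i7]
  rw [e2, e7,
    show (na + nb + nc + nd - 2 : ℝ) = nc + nb + na + nd + -1 + -1 by ring]
  simp only [map_add, map_neg, map_one]

lemma key3 (e al de' be ga' al' de be' ga rbe rde cal cga : R)
    (na nb nc nd : ℝ)
    (he : e * e = -1)
    (mal : e * al = al' * e) (mde' : e * de' = de * e)
    (mbe : e * be = be' * e) (mga' : e * ga' = ga * e)
    (nal : cal * al = algebraMap ℝ R na) (nde : rde * de' = algebraMap ℝ R nd)
    (nga : cga * ga = algebraMap ℝ R nc) (nbe : rbe * be' = algebraMap ℝ R nb)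
    (i5 : cal * de' - cga * be' = 1) (i3 : rde * al - rbe * ga = 1)
    (k4 : cga * de = rde * ga') (k3 : cal * be = rbe * al')
    (v4 : cal * ga' = cga * al') (v3 : rde * be = rbe * de) :
    (cal + rde + (cga - rbe) * e) * (al + de' + (be - ga') * e)
      = algebraMap ℝ R (na + nb + nc + nd + 2) := by
  have h1 : e * (al + de' + (be - ga') * e) = (al' + de) * e - (be' - ga) := by
    have h2 : e * ((be - ga') * e) = -(be' - ga) := by
      rw [← mul_assoc, mul_sub, mbe, mga', ← sub_mul, mul_assoc, he]
      noncomm_ring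
    rw [mul_add, mul_add, mal, mde', h2]
    noncomm_ring
  have expand : (cal + rde + (cga - rbe) * e) * (al + de' + (be - ga') * e)
      = (cal + rde) * (al + de') - (cga - rbe) * (be' - ga)
        + ((cal + rde) * (be - ga') + (cga - rbe) * (al' + de)) * e := by
    calc (cal + rde + (cga - rbe) * e) * (al + de' + (be - ga') * e)
        = (cal + rde) * (al + de' + (be - ga') * e)
          + (cga - rbe) * (e * (al + de' + (be - ga') * e)) := by noncomm_ring
      _ = _ := by rw [h1]; noncomm_ring
  rw [expand]
  have hbrack : (cal + rde) * (be - ga') + (cga - rbe) * (al' + de) = 0 := by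
    have hd : (cal + rde) * (be - ga') + (cga - rbe) * (al' + de)
        = (cal * be - rbe * al') + (cga * de - rde * ga')
          + (cga * al' - cal * ga') + (rde * be - rbe * de) := by noncomm_ring
    rw [hd, k3, k4, ← v4, v3]
    simp
  rw [hbrack, zero_mul, add_zero]
  have hscal : (cal + rde) * (al + de') - (cga - rbe) * (be' - ga)
      = cal * al + rde * de' + cga * ga + rbe * be'
        + (cal * de' - cga * be') + (rde * al - rbe * ga) := by noncomm_ring
  rw [hscal, nal, nde, nga, nbe, i5, i3,
    show (na + nb + nc + nd + 2 : ℝ) = na + nd + nc + nb + 1 + 1 by ring]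
  simp only [map_add, map_one]

end KeyRing

set_option maxHeartbeats 4000000 in
/-- for `M ∈ SL₊(Γ_n(ℝ))` with ball-model form `Ψ(M) = [[A,C'],[C,A']]`
and `C ≠ 0`, the centre `P = C⁻¹A'` and radius `R = 1/|C|` of the isometric sphere of
`Ψ(M)` satisfy `|P|² = (‖M‖²+2)/(‖M‖²-2)` and `R² = 4/(‖M‖²-2)`. -/
theorem stmt16 {m : ℕ} (α β γ δ : CliffordAlgebra (Qneg (m + 1)))
    (h : IsSmallVahlen α β γ δ)
    (hC : (2 : ℝ)⁻¹ • (γ + involute β + (δ - involute α) * gen (m + 1) (Fin.last m)) ≠ 0) :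
    let e := gen (m + 1) (Fin.last m)
    let A : CliffordAlgebra (Qneg (m + 1)) :=
      (2 : ℝ)⁻¹ • (α + involute δ + (β - involute γ) * e)
    let C : CliffordAlgebra (Qneg (m + 1)) :=
      (2 : ℝ)⁻¹ • (γ + involute β + (δ - involute α) * e)
    let P : CliffordAlgebra (Qneg (m + 1)) := Ring.inverse C * involute A
    let NM : ℝ := cnormSq α + cnormSq β + cnormSq γ + cnormSq δ
    cnormSq P = (NM + 2) / (NM - 2) ∧ 1 / cnormSq C = 4 / (NM - 2) := by
  obtain ⟨hα, hβ, hγ, hδ, hdet, hv1, hv2, hv3, hv4⟩ := h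
  intro e A C P NM
  obtain ⟨na, hna1, hna2, hna3⟩ := entry_norm hα
  obtain ⟨nb, hnb1, hnb2, hnb3⟩ := entry_norm hβ
  obtain ⟨nc, hnc1, hnc2, hnc3⟩ := entry_norm hγ
  obtain ⟨nd, hnd1, hnd2, hnd3⟩ := entry_norm hδ
  have hNM : NM = na + nb + nc + nd := by
    show cnormSq α + cnormSq β + cnormSq γ + cnormSq δ = _
    rw [hna3, hnb3, hnc3, hnd3]
  -- derived norm forms
  have hna4 : reverse α * involute α = algebraMap ℝ _ na := by
    have h' := congrArg involute hna1
    rwa [map_mul, involute_cconj, AlgHom.commutes] at h'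
  have hna5 : involute α * reverse α = algebraMap ℝ _ na := by
    have h' := congrArg involute hna2
    rwa [map_mul, involute_cconj, AlgHom.commutes] at h'
  have hnb4 : reverse β * involute β = algebraMap ℝ _ nb := by
    have h' := congrArg involute hnb1
    rwa [map_mul, involute_cconj, AlgHom.commutes] at h'
  have hnb5 : involute β * reverse β = algebraMap ℝ _ nb := by
    have h' := congrArg involute hnb2
    rwa [map_mul, involute_cconj, AlgHom.commutes] at h'
  have hnd4 : reverse δ * involute δ = algebraMap ℝ _ nd := by
    have h' := congrArg involute hnd1
    rwa [map_mul, involute_cconj, AlgHom.commutes] at h'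
  -- vector consequences
  have V2 : γ * reverse δ = δ * reverse γ := by
    have h' := smallVector_reverse hv2
    rw [reverse.map_mul, reverse_reverse] at h'
    exact h'.symm
  have V3 : reverse δ * β = reverse β * δ := by
    have h' := smallVector_reverse hv4
    rw [reverse.map_mul, reverse_reverse] at h'
    exact h'.symm
  have V4' : cconj α * involute γ = cconj γ * involute α := by
    have h' := smallVector_cconj hv3
    rwa [cconj_mul, cconj_reverse, map_mul, involute_reverse_eq] at h'
  have V1' : involute β * cconj α = involute α * cconj β := by
    have h' := smallVector_cconj hv1
    rwa [cconj_mul, cconj_reverse, map_mul, involute_reverse_eq] at h'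
  -- determinant identities
  have I6 : involute δ * cconj α - involute γ * cconj β = 1 := by
    have h' := congrArg cconj hdet
    rwa [cconj_sub, cconj_mul, cconj_mul, cconj_reverse, cconj_reverse, cconj_one] at h'
  have I2 : δ * reverse α - γ * reverse β = 1 := by
    have h' := congrArg involute I6
    rwa [map_sub, map_mul, map_mul, involute_involute, involute_involute, involute_cconj,
      involute_cconj, map_one] at h'
  have I7 : involute α * cconj δ - involute β * cconj γ = 1 := by
    have h' := congrArg CliffordAlgebra.reverse I6
    rwa [map_sub, reverse.map_mul, reverse.map_mul, reverse_cconj, reverse_cconj,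
      reverse_involute, reverse_involute, involute_reverse_eq, involute_reverse_eq,
      reverse.map_one] at h'
  have I3 : reverse δ * α - reverse β * γ = 1 := by
    rcases hδ with hδG | hδ0
    · have hnd0 : nd ≠ 0 := unit_norm_ne_zero (group_isUnit hδG) hnd1
      have hdet' : α * reverse δ = 1 + β * reverse γ := by
        have := hdet
        linear_combination (norm := noncomm_ring) this
      have main : (reverse δ * α) * algebraMap ℝ _ nd
          = (1 + reverse β * γ) * algebraMap ℝ _ nd := by
        calc (reverse δ * α) * algebraMap ℝ _ nd
            = reverse δ * ((α * reverse δ) * involute δ) := by rw [← hnd4]; noncomm_ring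
          _ = reverse δ * ((1 + β * reverse γ) * involute δ) := by rw [hdet']
          _ = reverse δ * involute δ + (reverse δ * β) * (reverse γ * involute δ) := by
              noncomm_ring
          _ = reverse δ * involute δ + (reverse β * δ) * (reverse γ * involute δ) := by rw [V3]
          _ = reverse δ * involute δ + reverse β * ((δ * reverse γ) * involute δ) := by
              noncomm_ring
          _ = reverse δ * involute δ + reverse β * ((γ * reverse δ) * involute δ) := by
              rw [← V2]
          _ = algebraMap ℝ _ nd + (reverse β * γ) * (reverse δ * involute δ) := by
              rw [← hnd4]; noncomm_ring
          _ = (1 + reverse β * γ) * algebraMap ℝ _ nd := by rw [hnd4]; noncomm_ring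
      have hcan := congrArg (fun z => nd⁻¹ • z) main
      rw [← mul_smul_comm, ← mul_smul_comm, norm_smul_one hnd0 rfl, mul_one, mul_one] at hcan
      rw [hcan]
      noncomm_ring
    · have hdet0 := hdet
      rw [hδ0, map_zero, mul_zero, zero_sub] at hdet0
      rw [hδ0, map_zero, zero_mul, zero_sub]
      have hβG : β ∈ SmallCliffordGroup m := by
        rcases hβ with hβG | hβ0
        · exact hβG
        · exfalso; rw [hβ0, zero_mul, neg_zero] at hdet0; exact one_ne_zero_cl hdet0.symm
      have hnb0 : nb ≠ 0 := unit_norm_ne_zero (group_isUnit hβG) hnb1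
      have hβrγ : β * reverse γ = -1 := neg_eq_iff_eq_neg.mp hdet0
      have hγrβ : γ * reverse β = -1 := by
        have h' := congrArg CliffordAlgebra.reverse hβrγ
        rwa [reverse.map_mul, reverse_reverse, map_neg, reverse.map_one] at h'
      have hfin : reverse β * γ = -1 := by
        calc reverse β * γ
            = (reverse β * γ) * (nb⁻¹ • (reverse β * involute β)) := by
              rw [norm_smul_one hnb0 hnb4, mul_one]
          _ = nb⁻¹ • ((reverse β * (γ * reverse β)) * involute β) := by
              rw [mul_smul_comm]; congr 1; noncomm_ring
          _ = nb⁻¹ • ((reverse β * (-1)) * involute β) := by rw [hγrβ]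
          _ = -(nb⁻¹ • (reverse β * involute β)) := by
              rw [mul_neg, mul_one, neg_mul, smul_neg]
          _ = -1 := by rw [norm_smul_one hnb0 hnb4]
      rw [hfin, neg_neg]
  have I4 : reverse α * δ - reverse γ * β = 1 := by
    have h' := congrArg CliffordAlgebra.reverse I3
    rwa [map_sub, reverse.map_mul, reverse.map_mul, reverse_reverse, reverse_reverse,
      reverse.map_one] at h'
  have I5 : cconj α * involute δ - cconj γ * involute β = 1 := by
    have h' := congrArg involute I4
    rwa [map_sub, map_mul, map_mul, involute_reverse_eq, involute_reverse_eq, map_one] at h'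
  -- K identities
  have K3 : cconj α * β = reverse β * involute α := patternA hv1 hβ
  have K4 : cconj γ * δ = reverse δ * involute γ := patternA hv2 hδ
  have K1 : γ * cconj α = involute α * reverse γ := patternB hv3 hα
  have K2 : δ * cconj β = involute β * reverse δ := patternB hv4 hβ
  -- commutation moves with e
  have Eα : gen (m+1) (Fin.last m) * α = involute α * gen (m+1) (Fin.last m) := ecomm_entry hα
  have Eβ : gen (m+1) (Fin.last m) * β = involute β * gen (m+1) (Fin.last m) := ecomm_entry hβ
  have Eγ : gen (m+1) (Fin.last m) * γ = involute γ * gen (m+1) (Fin.last m) := ecomm_entry hγ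
  have Eδ : gen (m+1) (Fin.last m) * δ = involute δ * gen (m+1) (Fin.last m) := ecomm_entry hδ
  have Eαi : gen (m+1) (Fin.last m) * involute α = α * gen (m+1) (Fin.last m) := by
    have h' : EComm (involute α) := ecomm_involute (ecomm_entry hα)
    unfold EComm at h'; rwa [involute_involute] at h'
  have Eβi : gen (m+1) (Fin.last m) * involute β = β * gen (m+1) (Fin.last m) := by
    have h' : EComm (involute β) := ecomm_involute (ecomm_entry hβ)
    unfold EComm at h'; rwa [involute_involute] at h'
  have Eγi : gen (m+1) (Fin.last m) * involute γ = γ * gen (m+1) (Fin.last m) := by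
    have h' : EComm (involute γ) := ecomm_involute (ecomm_entry hγ)
    unfold EComm at h'; rwa [involute_involute] at h'
  have Eδi : gen (m+1) (Fin.last m) * involute δ = δ * gen (m+1) (Fin.last m) := by
    have h' : EComm (involute δ) := ecomm_involute (ecomm_entry hδ)
    unfold EComm at h'; rwa [involute_involute] at h'
  have Eαc : gen (m+1) (Fin.last m) * cconj α = reverse α * gen (m+1) (Fin.last m) := by
    have h' : EComm (cconj α) := ecomm_cconj (ecomm_entry hα)
    unfold EComm at h'; rwa [involute_cconj] at h'
  have Eβc : gen (m+1) (Fin.last m) * cconj β = reverse β * gen (m+1) (Fin.last m) := by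
    have h' : EComm (cconj β) := ecomm_cconj (ecomm_entry hβ)
    unfold EComm at h'; rwa [involute_cconj] at h'
  have Eγc : gen (m+1) (Fin.last m) * cconj γ = reverse γ * gen (m+1) (Fin.last m) := by
    have h' : EComm (cconj γ) := ecomm_cconj (ecomm_entry hγ)
    unfold EComm at h'; rwa [involute_cconj] at h'
  have Eδc : gen (m+1) (Fin.last m) * cconj δ = reverse δ * gen (m+1) (Fin.last m) := by
    have h' : EComm (cconj δ) := ecomm_cconj (ecomm_entry hδ)
    unfold EComm at h'; rwa [involute_cconj] at h'
  have Eαr : gen (m+1) (Fin.last m) * reverse α = cconj α * gen (m+1) (Fin.last m) := by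
    have h' : EComm (reverse α) := ecomm_reverse (ecomm_entry hα)
    unfold EComm at h'; rwa [involute_reverse_eq] at h'
  have Eβr : gen (m+1) (Fin.last m) * reverse β = cconj β * gen (m+1) (Fin.last m) := by
    have h' : EComm (reverse β) := ecomm_reverse (ecomm_entry hβ)
    unfold EComm at h'; rwa [involute_reverse_eq] at h'
  have Eγr : gen (m+1) (Fin.last m) * reverse γ = cconj γ * gen (m+1) (Fin.last m) := by
    have h' : EComm (reverse γ) := ecomm_reverse (ecomm_entry hγ)
    unfold EComm at h'; rwa [involute_reverse_eq] at h'
  have Eδr : gen (m+1) (Fin.last m) * reverse δ = cconj δ * gen (m+1) (Fin.last m) := by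
    have h' : EComm (reverse δ) := ecomm_reverse (ecomm_entry hδ)
    unfold EComm at h'; rwa [involute_reverse_eq] at h'
  -- conjugates of the matrix entries of Ψ(M)
  have hXc : cconj (γ + involute β + (δ - involute α) * gen (m+1) (Fin.last m))
      = cconj γ + reverse β + (cconj α - reverse δ) * gen (m+1) (Fin.last m) := by
    rw [cconj_add, cconj_add, cconj_mul, cconj_sub, cconj_involute, cconj_involute, cconj_e]
    have hterm : (-(gen (m+1) (Fin.last m))) * (cconj δ - reverse α)
        = (cconj α - reverse δ) * gen (m+1) (Fin.last m) := by
      calc (-(gen (m+1) (Fin.last m))) * (cconj δ - reverse α)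
          = -(gen (m+1) (Fin.last m) * (cconj δ - reverse α)) := by rw [neg_mul]
        _ = -((reverse δ - cconj α) * gen (m+1) (Fin.last m)) := by
            rw [mul_sub, Eδc, Eαr, sub_mul]
        _ = (cconj α - reverse δ) * gen (m+1) (Fin.last m) := by rw [← neg_mul, neg_sub]
    rw [hterm]
  have hXa : cconj (α + involute δ + (β - involute γ) * gen (m+1) (Fin.last m))
      = cconj α + reverse δ + (cconj γ - reverse β) * gen (m+1) (Fin.last m) := by
    rw [cconj_add, cconj_add, cconj_mul, cconj_sub, cconj_involute, cconj_involute, cconj_e]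
    have hterm : (-(gen (m+1) (Fin.last m))) * (cconj β - reverse γ)
        = (cconj γ - reverse β) * gen (m+1) (Fin.last m) := by
      calc (-(gen (m+1) (Fin.last m))) * (cconj β - reverse γ)
          = -(gen (m+1) (Fin.last m) * (cconj β - reverse γ)) := by rw [neg_mul]
        _ = -((reverse β - cconj γ) * gen (m+1) (Fin.last m)) := by
            rw [mul_sub, Eβc, Eγr, sub_mul]
        _ = (cconj γ - reverse β) * gen (m+1) (Fin.last m) := by rw [← neg_mul, neg_sub]
    rw [hterm]
  -- the three norm computations
  have KC1 : cconj C * C = algebraMap ℝ _ ((NM - 2)/4) := by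
    show cconj ((2:ℝ)⁻¹ • (γ + involute β + (δ - involute α) * gen (m+1) (Fin.last m)))
        * ((2:ℝ)⁻¹ • (γ + involute β + (δ - involute α) * gen (m+1) (Fin.last m))) = _
    rw [cconj_smul, smul_mul_smul_comm, hXc,
      key1 (gen (m+1) (Fin.last m)) γ (involute β) δ (involute α) (involute γ) β (involute δ) α
        (reverse β) (reverse δ) (cconj α) (cconj γ) na nb nc nd e_mul_e Eγ Eβi Eδ Eαi
        hnc1 hnb4 hna1 hnd4 I5 I3 K4 K3 V4' V3,
      Algebra.smul_def, ← map_mul]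
    congr 1
    rw [hNM]; ring
  have KC2 : C * cconj C = algebraMap ℝ _ ((NM - 2)/4) := by
    show ((2:ℝ)⁻¹ • (γ + involute β + (δ - involute α) * gen (m+1) (Fin.last m)))
        * cconj ((2:ℝ)⁻¹ • (γ + involute β + (δ - involute α) * gen (m+1) (Fin.last m))) = _
    rw [cconj_smul, smul_mul_smul_comm, hXc,
      key2 (gen (m+1) (Fin.last m)) γ (involute β) δ (involute α) (reverse γ) (cconj β)
        (cconj δ) (reverse α) (reverse β) (reverse δ) (cconj α) (cconj γ) na nb nc nd e_mul_e
        Eγc Eβr Eαc Eδr hnc2 hnb5 hna5 hnd2 I2 I7 K1 K2 V1' V2,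
      Algebra.smul_def, ← map_mul]
    congr 1
    rw [hNM]; ring
  have KA1 : cconj A * A = algebraMap ℝ _ ((NM + 2)/4) := by
    show cconj ((2:ℝ)⁻¹ • (α + involute δ + (β - involute γ) * gen (m+1) (Fin.last m)))
        * ((2:ℝ)⁻¹ • (α + involute δ + (β - involute γ) * gen (m+1) (Fin.last m))) = _
    rw [cconj_smul, smul_mul_smul_comm, hXa,
      key3 (gen (m+1) (Fin.last m)) α (involute δ) β (involute γ) (involute α) δ (involute β) γ
        (reverse β) (reverse δ) (cconj α) (cconj γ) na nb nc nd e_mul_e Eα Eδi Eβ Eγi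
        hna1 hnd4 hnc1 hnb4 I5 I3 K4 K3 V4' V3,
      Algebra.smul_def, ← map_mul]
    congr 1
    rw [hNM]; ring
  have hCne : C ≠ 0 := hC
  have hPdef : P = Ring.inverse C * involute A := rfl
  clear_value P NM C A e
  refine ⟨?_, ?_⟩
  · -- first conjunct
    rcases eq_or_ne (NM - 2) 0 with hs | hs
    · have hs4 : ((NM - 2)/4 : ℝ) = 0 := by rw [hs]; norm_num
      have hCC0 : C * cconj C = 0 := by rw [KC2, hs4, map_zero]
      have hnu : ¬ IsUnit C := by
        intro hu
        have h2 : Ring.inverse C * (C * cconj C) = 0 := by rw [hCC0, mul_zero]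
        rw [← mul_assoc, Ring.inverse_mul_cancel C hu, one_mul] at h2
        have h3 : C = 0 := by rw [← cconj_cconj C, h2, cconj_zero]
        exact hCne h3
      have hP0 : P = 0 := by
        rw [hPdef, Ring.inverse_non_unit C hnu, zero_mul]
      have hP : cnormSq P = 0 := by
        rw [cnormSq, hP0, cconj_zero, zero_mul, scalarPart_zero]
      rw [hP, hs, div_zero]
    · set s : ℝ := (NM - 2)/4 with hs_def
      have hs0 : s ≠ 0 := by rw [hs_def]; exact div_ne_zero hs (by norm_num)
      have hinv1 : C * (s⁻¹ • cconj C) = 1 := by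
        rw [mul_smul_comm, KC2]; exact norm_smul_one hs0 rfl
      have hinv2 : (s⁻¹ • cconj C) * C = 1 := by
        rw [smul_mul_assoc, KC1]; exact norm_smul_one hs0 rfl
      have hCu : IsUnit C := ⟨⟨C, s⁻¹ • cconj C, hinv1, hinv2⟩, rfl⟩
      have hRinv : Ring.inverse C = s⁻¹ • cconj C := by
        calc Ring.inverse C = Ring.inverse C * (C * (s⁻¹ • cconj C)) := by rw [hinv1, mul_one]
          _ = (Ring.inverse C * C) * (s⁻¹ • cconj C) := by rw [mul_assoc]
          _ = s⁻¹ • cconj C := by rw [Ring.inverse_mul_cancel C hCu, one_mul]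
      have hrAiA : reverse A * involute A = algebraMap ℝ _ ((NM + 2)/4) := by
        have h' := congrArg involute KA1
        rwa [map_mul, involute_cconj, AlgHom.commutes] at h'
      have hPval : P = s⁻¹ • (cconj C * involute A) := by
        rw [hPdef, hRinv, smul_mul_assoc]
      have hcP : cconj P = s⁻¹ • (reverse A * C) := by
        rw [hPval, cconj_smul, cconj_mul, cconj_involute, cconj_cconj]
      have hinner : (reverse A * C) * (cconj C * involute A)
          = algebraMap ℝ _ (s * ((NM + 2)/4)) := by
        calc (reverse A * C) * (cconj C * involute A)
            = reverse A * (C * cconj C) * involute A := by noncomm_ring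
          _ = reverse A * algebraMap ℝ _ s * involute A := by rw [KC2]
          _ = algebraMap ℝ _ s * (reverse A * involute A) := by
              rw [← Algebra.commutes s (reverse A), mul_assoc]
          _ = algebraMap ℝ _ s * algebraMap ℝ _ ((NM + 2)/4) := by rw [hrAiA]
          _ = algebraMap ℝ _ (s * ((NM + 2)/4)) := by rw [← map_mul]
      have hPP : cconj P * P = algebraMap ℝ _ (s⁻¹ * s⁻¹ * (s * ((NM + 2)/4))) := by
        rw [hcP, hPval, smul_mul_smul_comm, hinner, Algebra.smul_def, ← map_mul]
      have hfin : cnormSq P = s⁻¹ * s⁻¹ * (s * ((NM + 2)/4)) := by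
        rw [cnormSq, hPP, scalarPart_algebraMap]
      rw [hfin, hs_def]
      field_simp
  · -- second conjunct
    have hcC : cnormSq C = (NM - 2)/4 := by
      rw [cnormSq, KC1, scalarPart_algebraMap]
    rw [hcC, one_div, inv_div]
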